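/- For 0 < p < 1/N, the variance of the number T_{n,k} of open downward paths of length k satisfies Var(T_{n,k}) ≤ 2 (1 - Np)^{-1} E(T_{n,k}); for p = 1/N, Var(T_{n,k}) ≤ 2 (k+1) E(T_{n,k}); and for 1/N < p < 1, Var(T_{n,k}) ≤ 2 N^{k+1} p^{k+1} (Np - 1)^{-1} E(T_{n,k}). -/

import Mathlib

/-!
Write `T = ∑_b 1_{A_b}`, where `b` runs over the bottoms of the paths, `P_b` is the vertex set of
the path with bottom `b` and `A_b` the event that its `k + 1` vertices are open. Then
`Var T = ∑_{b,b'} (p ^ |P_b ∪ P_b'| - p ^ (2k+2))`, and only pairs of paths sharing `m ≥ 1`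
vertices contribute, each at most `p ^ (2k+2-m)`. Two downward paths that meet share a segment
starting at the top of the deeper one, `b'` say; the shallower path is then determined by `b'` and
its branch off the path of `b'`, a word of length at most `r = k + 1 - m` whose letter at the
branch point is not the one of `b'`. Padding such words to length `r` with that letter of `b'` is
injective, so there are at most `N ^ r` of them, at most `2 |B| N ^ r` pairs in all, and
`Var T ≤ 2 E T ∑_{r ≤ k} (N p) ^ r`; the three regimes are those of this geometric sum.
-/

open MeasureTheory ProbabilityTheory
open scoped Classical

/-- The level-`j` vertices of the rooted `N`-ary tree, encoded as lists of directions read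
from the vertex back up to the root (root = `[]`, children of `v` are `d :: v`,
the ancestor `i` levels above `v` is `v.drop i`). -/
noncomputable def listsLen (N j : ℕ) : Finset (List (Fin N)) :=
  (Finset.univ : Finset (Fin j → Fin N)).image List.ofFn

/-- A downward path of length `k` in the depth-`n` tree is determined by its bottom vertex,
which can be any vertex at level `j` with `k ≤ j ≤ n`. -/
noncomputable def pathBottoms (N n k : ℕ) : Finset (List (Fin N)) :=
  (Finset.Icc k n).biUnion (listsLen N)

open Finset

lemma Monotone.iff_sub_card_filter_range_le {P : ℕ → Prop} [DecidablePred P] (hP : Monotone P)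
    {n i : ℕ} (hi : i < n) : P i ↔ n - #{j ∈ range n | P j} ≤ i := by
  induction n generalizing i with
  | zero => omega
  | succ n ih =>
    by_cases hn : P n
    · rw [range_add_one, filter_insert, if_pos hn,
        card_insert_of_notMem (by simp), Nat.add_sub_add_right]
      rcases Nat.lt_succ_iff_lt_or_eq.mp hi with hi | rfl
      · exact ih hi
      · simp [hn]
    · have hnone : ∀ j ≤ n, ¬P j := fun j hj hPj ↦ hn (hP hj hPj)
      rw [filter_false_of_mem fun j hj ↦ hnone j (Nat.lt_succ_iff.mp (mem_range.mp hj))]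
      simp only [card_empty, Nat.sub_zero]
      exact iff_of_false (hnone i (by omega)) (by omega)

section Lists

variable {α : Type*}

lemma List.injOn_drop (b : List α) : Set.InjOn b.drop (Set.Iic b.length) := by
  intro i hi j hj h
  have := congrArg List.length h
  simp only [List.length_drop, Set.mem_Iic] at this hi hj
  omega

def padRight (c : α) (r : ℕ) (w : List α) : List α := w ++ List.replicate (r - w.length) c

lemma length_padRight (c : α) {r : ℕ} {w : List α} (h : w.length ≤ r) :
    (padRight c r w).length = r := by
  simp only [padRight, List.length_append, List.length_replicate]
  omega

lemma List.rdropWhile_append_replicate {p : α → Bool} {c : α} (hc : p c) (l : List α) (n : ℕ) :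
    (l ++ replicate n c).rdropWhile p = l.rdropWhile p := by
  induction n with
  | zero => simp
  | succ n ih => rw [replicate_succ', ← append_assoc, rdropWhile_concat_pos _ _ _ hc, ih]

variable [DecidableEq α]

lemma padRight_injective {c : α} {r : ℕ} {w₁ w₂ : List α} (h₁ : ∀ hw : w₁ ≠ [], w₁.getLast hw ≠ c)
    (h₂ : ∀ hw : w₂ ≠ [], w₂.getLast hw ≠ c) (h : padRight c r w₁ = padRight c r w₂) :
    w₁ = w₂ := by
  have strip : ∀ w : List α, (∀ hw : w ≠ [], w.getLast hw ≠ c) →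
      (padRight c r w).rdropWhile (· == c) = w := fun w hw ↦ by
    rw [padRight, List.rdropWhile_append_replicate (by simp), List.rdropWhile_eq_self_iff]
    simpa using hw
  rw [← strip w₁ h₁, h, strip w₂ h₂]

def pathVertices (k : ℕ) (b : List α) : Finset (List α) := (range (k + 1)).image b.drop

lemma card_pathVertices {k : ℕ} {b : List α} (hb : k ≤ b.length) :
    #(pathVertices k b) = k + 1 := by
  rw [pathVertices, card_image_of_injOn (b.injOn_drop.mono fun i hi ↦ ?_), card_range]
  simp only [coe_range, Set.mem_Iio, Set.mem_Iic] at hi ⊢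
  omega

/-- Comparing levels, a common vertex `b.drop i = b'.drop j` has
`j = i + (b'.length - b.length)`. -/
lemma card_pathVertices_inter {k : ℕ} {b b' : List α} (hb : k ≤ b.length)
    (hbb' : b.length ≤ b'.length) :
    #(pathVertices k b ∩ pathVertices k b') =
      #{i ∈ range (k + 1 - (b'.length - b.length)) |
        b.drop i = b'.drop (i + (b'.length - b.length))} := by
  set d := b'.length - b.length
  have hinter : pathVertices k b ∩ pathVertices k b' =
      {i ∈ range (k + 1 - d) | b.drop i = b'.drop (i + d)}.image b.drop := by
    ext v
    simp only [pathVertices, mem_inter, mem_image, mem_filter, mem_range]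
    constructor
    · rintro ⟨⟨i, hi, rfl⟩, j, hj, hji⟩
      have := congrArg List.length hji
      simp only [List.length_drop] at this
      exact ⟨i, ⟨by omega, by rw [← hji]; congr 1; omega⟩, rfl⟩
    · rintro ⟨i, ⟨hi, hP⟩, rfl⟩
      exact ⟨⟨i, by omega, rfl⟩, i + d, by omega, hP.symm⟩
  rw [hinter, card_image_of_injOn (b.injOn_drop.mono fun i hi ↦ ?_)]
  simp only [coe_filter, mem_range, Set.mem_ofPred_eq, Set.mem_Iic] at hi ⊢
  omega

lemma exists_eq_append_drop_of_card_pathVertices_inter {k r : ℕ} {b b' : List α}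
    (hb : k ≤ b.length) (hbb' : b.length ≤ b'.length) (hr : r ≤ k)
    (h : #(pathVertices k b ∩ pathVertices k b') = k + 1 - r) :
    ∃ w : List α, w.length ≤ r ∧ b = w ++ b'.drop r ∧
      ∀ hw : w ≠ [], b'[r - 1]? ≠ some (w.getLast hw) := by
  rw [card_pathVertices_inter hb hbb'] at h
  set d := b'.length - b.length
  set P : ℕ → Prop := fun i ↦ b.drop i = b'.drop (i + d)
  have hP : Monotone P := monotone_nat_of_le_succ fun i (hi : b.drop i = _) ↦ by
    simpa [P, List.drop_drop, Nat.add_right_comm, Nat.add_comm 1] using congrArg (List.drop 1) hi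
  have hle : k + 1 - r ≤ k + 1 - d := h ▸ (card_filter_le _ _).trans_eq (card_range _)
  have hP_iff : ∀ i < k + 1 - d, P i ↔ r - d ≤ i := fun i hi ↦ by
    rw [hP.iff_sub_card_filter_range_le hi]
    simp only [P]
    rw [h]
    omega
  have hdrop : b.drop (r - d) = b'.drop r := by
    have : b.drop (r - d) = b'.drop (r - d + d) := (hP_iff (r - d) (by omega)).mpr le_rfl
    rwa [Nat.sub_add_cancel (by omega)] at this
  refine ⟨b.take (r - d), by simp only [List.length_take]; omega,
    by rw [← hdrop, List.take_append_drop], ?_⟩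
  intro hw hlast
  have hpos : 0 < r - d := by
    by_contra h0; exact hw (by simp [show r - d = 0 by omega])
  apply absurd ((hP_iff (r - d - 1) (by omega)).mp ?_) (by omega)
  show b.drop (r - d - 1) = b'.drop (r - d - 1 + d)
  rw [List.getLast_take, List.getElem?_eq_getElem (by omega), Option.some_inj,
    List.getElem?_eq_getElem (l := b) (by omega), Option.getD_some] at hlast
  rw [show r - d - 1 + d = r - 1 by omega, List.drop_eq_getElem_cons (by omega),
    List.drop_eq_getElem_cons (l := b') (by omega), show r - d - 1 + 1 = r - d by omega,
    show r - 1 + 1 = r by omega, hdrop, hlast]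

end Lists

lemma card_filter_product_le_two_mul {β γ : Type*} [LinearOrder γ] (B : Finset β)
    {R : β → β → Prop} [DecidableRel R] (hR : ∀ b b', R b b' → R b' b) (f : β → γ) :
    #{q ∈ B ×ˢ B | R q.1 q.2} ≤ 2 * #{q ∈ B ×ˢ B | R q.1 q.2 ∧ f q.1 ≤ f q.2} := by
  have hswap : #{q ∈ B ×ˢ B | R q.1 q.2 ∧ f q.2 ≤ f q.1} =
      #{q ∈ B ×ˢ B | R q.1 q.2 ∧ f q.1 ≤ f q.2} :=
    card_equiv (Equiv.prodComm _ _) fun q ↦ by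
      simp only [mem_filter, mem_product, Equiv.prodComm_apply, Prod.fst_swap, Prod.snd_swap]
      exact ⟨fun ⟨⟨h₁, h₂⟩, hq, hle⟩ ↦ ⟨⟨h₂, h₁⟩, hR _ _ hq, hle⟩,
        fun ⟨⟨h₁, h₂⟩, hq, hle⟩ ↦ ⟨⟨h₂, h₁⟩, hR _ _ hq, hle⟩⟩
  calc #{q ∈ B ×ˢ B | R q.1 q.2}
      ≤ #({q ∈ B ×ˢ B | R q.1 q.2 ∧ f q.1 ≤ f q.2} ∪ {q ∈ B ×ˢ B | R q.1 q.2 ∧ f q.2 ≤ f q.1}) :=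
        card_le_card fun q hq ↦ by
          simp only [mem_filter, mem_union] at hq ⊢
          rcases le_total (f q.1) (f q.2) with h | h
          exacts [Or.inl ⟨hq.1, hq.2, h⟩, Or.inr ⟨hq.1, hq.2, h⟩]
    _ ≤ _ := (card_union_le _ _).trans_eq (by rw [hswap, two_mul])

lemma mem_listsLen {N j : ℕ} {l : List (Fin N)} : l ∈ listsLen N j ↔ l.length = j := by
  simp only [listsLen, mem_image, mem_univ, true_and]
  exact ⟨by rintro ⟨f, rfl⟩; simp, by rintro rfl; exact ⟨l.get, List.ofFn_get l⟩⟩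

lemma card_listsLen (N j : ℕ) : #(listsLen N j) = N ^ j := by
  rw [listsLen, card_image_of_injective _ List.ofFn_injective, card_univ, Fintype.card_fun,
    Fintype.card_fin, Fintype.card_fin]

/-- The deeper bottom `b'` together with the branch `w` of `b` off the path of `b'`, padded to
length `r` with the letter that would continue along that path, determines the pair. -/
lemma card_filter_pathVertices_inter_le {N k r : ℕ} (hN : 0 < N) {B : Finset (List (Fin N))}
    (hB : ∀ b ∈ B, k ≤ b.length) (hr : r ≤ k) :
    #{q ∈ B ×ˢ B | #(pathVertices k q.1 ∩ pathVertices k q.2) = k + 1 - r ∧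
      q.1.length ≤ q.2.length} ≤ #B * N ^ r := by
  have hstruct : ∀ q ∈ {q ∈ B ×ˢ B | #(pathVertices k q.1 ∩ pathVertices k q.2) = k + 1 - r ∧
      q.1.length ≤ q.2.length}, q.2 ∈ B ∧ ∃ w : List (Fin N), w.length ≤ r ∧
        q.1 = w ++ q.2.drop r ∧ q.1.take (q.1.length + r - q.2.length) = w ∧
        ∀ hw : w ≠ [], w.getLast hw ≠ q.2.getD (r - 1) ⟨0, hN⟩ := by
    rintro ⟨b, b'⟩ hq
    simp only [mem_filter, mem_product] at hq
    obtain ⟨⟨hb, hb'⟩, hcard, hlen⟩ := hq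
    obtain ⟨w, hwr, rfl, hlast⟩ :=
      exists_eq_append_drop_of_card_pathVertices_inter (hB b hb) hlen hr hcard
    have hk := hB b' hb'
    refine ⟨hb', w, hwr, rfl, List.take_left' ?_, fun hw hc ↦ hlast hw ?_⟩
    · simp only [List.length_append, List.length_drop]
      omega
    · have hpos : 0 < w.length := List.length_pos_iff.mpr hw
      rw [hc, List.getD_eq_getElem?_getD, List.getElem?_eq_getElem (by omega), Option.getD_some]
  calc _ ≤ #(B ×ˢ listsLen N r) := by
        refine card_le_card_of_injOn
          (fun q ↦ (q.2, padRight (q.2.getD (r - 1) ⟨0, hN⟩) r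
            (q.1.take (q.1.length + r - q.2.length)))) ?_ ?_
        · intro q hq
          obtain ⟨hb', w, hwr, -, hw, -⟩ := hstruct q hq
          simp only [coe_product, Set.mem_prod, mem_coe, mem_listsLen, hw]
          exact ⟨hb', length_padRight _ hwr⟩
        · intro q₁ hq₁ q₂ hq₂ h
          obtain ⟨-, w₁, -, e₁, hw₁, hl₁⟩ := hstruct q₁ hq₁
          obtain ⟨-, w₂, -, e₂, hw₂, hl₂⟩ := hstruct q₂ hq₂
          simp only [Prod.mk.injEq, hw₁, hw₂] at h
          obtain ⟨h2, hpad⟩ := h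
          rw [h2] at hl₁ hpad e₁
          exact Prod.ext (by rw [e₁, e₂, padRight_injective hl₁ hl₂ hpad]) h2
    _ = #B * N ^ r := by rw [card_product, card_listsLen]

lemma card_filter_pathVertices_inter_le_two_mul {N k r : ℕ} (hN : 0 < N)
    {B : Finset (List (Fin N))} (hB : ∀ b ∈ B, k ≤ b.length) (hr : r ≤ k) :
    #{q ∈ B ×ˢ B | #(pathVertices k q.1 ∩ pathVertices k q.2) = k + 1 - r} ≤
      2 * (#B * N ^ r) :=
  (card_filter_product_le_two_mul B
      (R := fun b b' ↦ #(pathVertices k b ∩ pathVertices k b') = k + 1 - r)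
      (fun b b' h ↦ by simpa only [inter_comm] using h) List.length).trans
    (Nat.mul_le_mul_left 2 (card_filter_pathVertices_inter_le hN hB hr))

section AllOpen

variable {Ω ι : Type*}

def allOpen (X : ι → Ω → Bool) (S : Finset ι) : Set Ω := ⋂ v ∈ S, X v ⁻¹' {true}

variable {X : ι → Ω → Bool}

lemma mem_allOpen {S : Finset ι} {ω : Ω} : ω ∈ allOpen X S ↔ ∀ v ∈ S, X v ω = true := by
  simp [allOpen]

lemma allOpen_union [DecidableEq ι] (S S' : Finset ι) :
    allOpen X (S ∪ S') = allOpen X S ∩ allOpen X S' :=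
  set_biInter_inter S S' _

variable [MeasurableSpace Ω] {μ : Measure Ω}

lemma measurableSet_allOpen (hmeas : ∀ v, Measurable (X v)) (S : Finset ι) :
    MeasurableSet (allOpen X S) :=
  S.measurableSet_biInter fun v _ ↦ hmeas v (measurableSet_singleton true)

lemma measureReal_allOpen {p : ℝ} (hp : 0 ≤ p) (hindep : iIndepFun X μ)
    (hBer : ∀ v, μ {ω | X v ω = true} = ENNReal.ofReal p) (S : Finset ι) :
    μ.real (allOpen X S) = p ^ #S := by
  rw [measureReal_def, allOpen,
    hindep.meas_biInter fun v _ ↦ ⟨{true}, measurableSet_singleton true, rfl⟩]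
  simp_rw [Set.preimage, Set.mem_singleton_iff, hBer, prod_const, ENNReal.toReal_pow,
    ENNReal.toReal_ofReal hp]

end AllOpen

lemma variance_sum_indicator_one {Ω β : Type*} [MeasurableSpace Ω] {μ : Measure Ω}
    [IsProbabilityMeasure μ] {A : β → Set Ω} (hA : ∀ b, MeasurableSet (A b)) (B : Finset β) :
    Var[fun ω ↦ ∑ b ∈ B, (A b).indicator 1 ω; μ]
      = ∑ b ∈ B, ∑ b' ∈ B, (μ.real (A b ∩ A b') - μ.real (A b) * μ.real (A b')) := by
  have hL2 : ∀ b ∈ B, MemLp ((A b).indicator (1 : Ω → ℝ)) 2 μ := fun b _ ↦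
    memLp_indicator_const 2 (hA b) 1 (Or.inr (measure_ne_top μ _))
  have hmeas : AEMeasurable (fun ω ↦ ∑ b ∈ B, (A b).indicator (1 : Ω → ℝ) ω) μ :=
    (Finset.measurable_fun_sum B fun b _ ↦ measurable_one.indicator (hA b)).aemeasurable
  rw [← covariance_self hmeas, covariance_fun_sum_fun_sum' hL2 hL2]
  refine sum_congr rfl fun b hb ↦ sum_congr rfl fun b' hb' ↦ ?_
  rw [covariance_eq_sub (hL2 b hb) (hL2 b' hb'), ← Set.inter_indicator_one,
    integral_indicator_one ((hA b).inter (hA b')), integral_indicator_one (hA b),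
    integral_indicator_one (hA b')]

/-- The covariance of two paths with `a` vertices in their union and `m` in common, filed under
`r = k + 1 - m`. -/
lemma pow_sub_pow_le_sum_ite {p : ℝ} (hp : 0 ≤ p) {k a m : ℕ} (ham : a + m = 2 * (k + 1))
    (hm : m ≤ k + 1) :
    p ^ a - p ^ (k + 1) * p ^ (k + 1) ≤
      ∑ r ∈ range (k + 1), if m = k + 1 - r then p ^ (k + 1 + r) else 0 := by
  rcases Nat.eq_zero_or_pos m with rfl | hm0
  · rw [sum_eq_zero fun r hr ↦ if_neg (by have := mem_range.mp hr; omega), ← pow_add,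
      show a = k + 1 + (k + 1) by omega, sub_self]
  · rw [sum_eq_single_of_mem (k + 1 - m) (mem_range.mpr (by omega)) fun r _ hr ↦ if_neg (by omega),
      if_pos (by omega), show k + 1 + (k + 1 - m) = a by omega]
    have := mul_nonneg (pow_nonneg hp (k + 1)) (pow_nonneg hp (k + 1))
    linarith

section OpenPaths

variable {Ω : Type*} [MeasurableSpace Ω] {μ : Measure Ω} {N k : ℕ}
  {X : List (Fin N) → Ω → Bool} {p : ℝ} {B : Finset (List (Fin N))}

lemma integral_sum_indicator_allOpen [IsFiniteMeasure μ] (hp : 0 ≤ p)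
    (hmeas : ∀ v, Measurable (X v)) (hindep : iIndepFun X μ)
    (hBer : ∀ v, μ {ω | X v ω = true} = ENNReal.ofReal p) (hB : ∀ b ∈ B, k ≤ b.length) :
    ∫ ω, ∑ b ∈ B, (allOpen X (pathVertices k b)).indicator (1 : Ω → ℝ) ω ∂μ =
      #B * p ^ (k + 1) := by
  rw [integral_finsetSum (f := fun b ↦ (allOpen X (pathVertices k b)).indicator (1 : Ω → ℝ)) B
    fun b _ ↦ (integrable_const 1).indicator (measurableSet_allOpen hmeas _)]
  simp_rw [integral_indicator_one (measurableSet_allOpen hmeas _),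
    measureReal_allOpen hp hindep hBer]
  rw [sum_congr rfl fun b hb ↦ by rw [card_pathVertices (hB b hb)], sum_const, nsmul_eq_mul]

theorem variance_sum_indicator_allOpen_le [IsProbabilityMeasure μ] (hN : 0 < N) (hp : 0 ≤ p)
    (hmeas : ∀ v, Measurable (X v)) (hindep : iIndepFun X μ)
    (hBer : ∀ v, μ {ω | X v ω = true} = ENNReal.ofReal p) (hB : ∀ b ∈ B, k ≤ b.length) :
    Var[fun ω ↦ ∑ b ∈ B, (allOpen X (pathVertices k b)).indicator 1 ω; μ] ≤
      2 * (#B * p ^ (k + 1)) * ∑ r ∈ range (k + 1), (N * p) ^ r := by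
  rw [variance_sum_indicator_one (fun b ↦ measurableSet_allOpen hmeas _)]
  simp_rw [← allOpen_union, measureReal_allOpen hp hindep hBer]
  rw [← sum_product' (f := fun b b' ↦ p ^ #(pathVertices k b ∪ pathVertices k b') -
    p ^ #(pathVertices k b) * p ^ #(pathVertices k b'))]
  calc _ ≤ ∑ q ∈ B ×ˢ B, ∑ r ∈ range (k + 1),
        if #(pathVertices k q.1 ∩ pathVertices k q.2) = k + 1 - r then p ^ (k + 1 + r) else 0 := by
        refine sum_le_sum fun q hq ↦ ?_
        obtain ⟨hb, hb'⟩ := mem_product.mp hq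
        have hcard := card_union_add_card_inter (pathVertices k q.1) (pathVertices k q.2)
        rw [card_pathVertices (hB _ hb), card_pathVertices (hB _ hb')] at hcard ⊢
        exact pow_sub_pow_le_sum_ite hp (by omega)
          ((card_le_card inter_subset_left).trans (card_pathVertices (hB _ hb)).le)
    _ = ∑ r ∈ range (k + 1),
        #{q ∈ B ×ˢ B | #(pathVertices k q.1 ∩ pathVertices k q.2) = k + 1 - r} *
          p ^ (k + 1 + r) := by
        rw [sum_comm]
        simp_rw [← sum_filter, sum_const, nsmul_eq_mul]
    _ ≤ ∑ r ∈ range (k + 1), (2 * (#B * N ^ r) : ℕ) * p ^ (k + 1 + r) := by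
        gcongr with r hr
        exact card_filter_pathVertices_inter_le_two_mul hN hB (Nat.lt_succ_iff.mp (mem_range.mp hr))
    _ = 2 * (#B * p ^ (k + 1)) * ∑ r ∈ range (k + 1), (N * p) ^ r := by
        rw [mul_sum]
        refine sum_congr rfl fun r _ ↦ ?_
        push_cast
        ring

end OpenPaths

lemma geom_sum_le_inv_one_sub {x : ℝ} (hx0 : 0 ≤ x) (hx1 : x < 1) (n : ℕ) :
    ∑ i ∈ range n, x ^ i ≤ (1 - x)⁻¹ := by
  have := geom_sum_Ico_le_of_lt_one (m := 0) (n := n) hx0 hx1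
  rwa [← range_eq_Ico, pow_zero, one_div] at this

lemma geom_sum_le_pow_mul_inv_sub_one {x : ℝ} (hx : 1 < x) (n : ℕ) :
    ∑ i ∈ range n, x ^ i ≤ x ^ n * (x - 1)⁻¹ := by
  rw [geom_sum_eq hx.ne', div_eq_mul_inv]
  exact mul_le_mul_of_nonneg_right (by linarith) (inv_nonneg.mpr (by linarith))

lemma le_length_of_mem_pathBottoms {N n k : ℕ} {b : List (Fin N)} (hb : b ∈ pathBottoms N n k) :
    k ≤ b.length := by
  obtain ⟨j, hj, hb⟩ := mem_biUnion.mp hb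
  rw [mem_listsLen.mp hb]
  exact (mem_Icc.mp hj).1

theorem stmt10_general (N n k : ℕ) (hN : 2 ≤ N) (p : ℝ) (hp0 : 0 < p)
    {Ω : Type} [MeasurableSpace Ω] (μ : Measure Ω) [IsProbabilityMeasure μ]
    (X : List (Fin N) → Ω → Bool)
    (hmeas : ∀ v, Measurable (X v))
    (hindep : iIndepFun X μ)
    (hBer : ∀ v, μ {ω | X v ω = true} = ENNReal.ofReal p)
    (T : Ω → ℕ)
    (hT : ∀ ω, T ω = ((pathBottoms N n k).filter
        (fun b => ∀ i ∈ Finset.range (k + 1), X (b.drop i) ω = true)).card) :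
    (p < 1 / N → variance (fun ω => (T ω : ℝ)) μ
        ≤ 2 * (1 - N * p)⁻¹ * ∫ ω, (T ω : ℝ) ∂μ) ∧
    (p = 1 / N → variance (fun ω => (T ω : ℝ)) μ
        ≤ 2 * (k + 1) * ∫ ω, (T ω : ℝ) ∂μ) ∧
    (1 / N < p → variance (fun ω => (T ω : ℝ)) μ
        ≤ 2 * (N : ℝ) ^ (k + 1) * p ^ (k + 1) * (N * p - 1)⁻¹ * ∫ ω, (T ω : ℝ) ∂μ) := by
  have hN0 : (0 : ℝ) < N := by norm_cast; omega
  have hTsum : (fun ω ↦ (T ω : ℝ)) =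
      fun ω ↦ ∑ b ∈ pathBottoms N n k, (allOpen X (pathVertices k b)).indicator 1 ω := by
    funext ω
    rw [hT, card_filter]
    push_cast
    refine sum_congr rfl fun b _ ↦ ?_
    simp [Set.indicator_apply, mem_allOpen, pathVertices]
  have hB : ∀ b ∈ pathBottoms N n k, k ≤ b.length := fun b ↦ le_length_of_mem_pathBottoms
  have hvar := variance_sum_indicator_allOpen_le (μ := μ) (by omega) hp0.le hmeas hindep hBer hB
  rw [hTsum, integral_sum_indicator_allOpen hp0.le hmeas hindep hBer hB]
  set E : ℝ := #(pathBottoms N n k) * p ^ (k + 1)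
  have hE : 0 ≤ 2 * E := by positivity
  refine ⟨fun hp ↦ ?_, fun hp ↦ ?_, fun hp ↦ ?_⟩
  · have hNp : N * p < 1 := (lt_div_iff₀' hN0).mp hp
    calc _ ≤ 2 * E * (1 - N * p)⁻¹ :=
          hvar.trans (mul_le_mul_of_nonneg_left (geom_sum_le_inv_one_sub (by positivity) hNp _) hE)
      _ = _ := by ring
  · have hNp : N * p = 1 := by rw [hp, mul_one_div_cancel hN0.ne']
    refine hvar.trans_eq ?_
    simp only [hNp, one_pow, sum_const, card_range, nsmul_eq_mul, Nat.cast_add, Nat.cast_one]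
    ring
  · have hNp : 1 < N * p := (div_lt_iff₀' hN0).mp hp
    calc _ ≤ 2 * E * ((N * p) ^ (k + 1) * (N * p - 1)⁻¹) :=
          hvar.trans (mul_le_mul_of_nonneg_left (geom_sum_le_pow_mul_inv_sub_one hNp _) hE)
      _ = _ := by ring

/-- Variance bounds for the number `T_{n,k}` of open downward paths of length `k` in the
`N`-ary tree of depth `n`, each vertex being open independently with probability `p`:
`Var(T_{n,k}) ≤ 2(1-Np)⁻¹ E(T_{n,k})` if `p < 1/N`;
`Var(T_{n,k}) ≤ 2(k+1) E(T_{n,k})` if `p = 1/N`;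
`Var(T_{n,k}) ≤ 2 N^{k+1} p^{k+1} (Np-1)⁻¹ E(T_{n,k})` if `p > 1/N`. -/
theorem stmt10 (N n k : ℕ) (hN : 2 ≤ N) (hk : k ≤ n) (p : ℝ) (hp0 : 0 < p) (hp1 : p < 1)
    {Ω : Type} [MeasurableSpace Ω] (μ : Measure Ω) [IsProbabilityMeasure μ]
    (X : List (Fin N) → Ω → Bool)
    (hmeas : ∀ v, Measurable (X v))
    (hindep : iIndepFun X μ)
    (hBer : ∀ v, μ {ω | X v ω = true} = ENNReal.ofReal p)
    (T : Ω → ℕ)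
    (hT : ∀ ω, T ω = ((pathBottoms N n k).filter
        (fun b => ∀ i ∈ Finset.range (k + 1), X (b.drop i) ω = true)).card) :
    (p < 1 / N → variance (fun ω => (T ω : ℝ)) μ
        ≤ 2 * (1 - N * p)⁻¹ * ∫ ω, (T ω : ℝ) ∂μ) ∧
    (p = 1 / N → variance (fun ω => (T ω : ℝ)) μ
        ≤ 2 * (k + 1) * ∫ ω, (T ω : ℝ) ∂μ) ∧
    (1 / N < p → variance (fun ω => (T ω : ℝ)) μ
        ≤ 2 * (N : ℝ) ^ (k + 1) * p ^ (k + 1) * (N * p - 1)⁻¹ * ∫ ω, (T ω : ℝ) ∂μ) :=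
  stmt10_general N n k hN p hp0 μ X hmeas hindep hBer T hT
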